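/- arXiv:1502.02130 — 3 statements merged into one kernel-verified Lean document; each statement's English description precedes it below -/
import Mathlib

section
/- If X and Y are real random variables and Y' has the same distribution as Y but is countermonotonic to X (i.e., Y' is a decreasing rearrangement of Y against X), then for any convex function f, E[f(X + Y')] ≤ E[f(X + Y)]. In the finite setting: for vectors x, y ∈ ℝ^m and any permutation σ of {1,...,m}, if y' is the vector y sorted so that it is oppositely ordered to x, then ∑ᵢ f(xᵢ + y'ᵢ) ≤ ∑ᵢ f(xᵢ + y_{σ(i)}) for every convex f : ℝ → ℝ. -/
/-!
A function `φ` with increasing differences, `φ a d + φ b c ≤ φ a c + φ b d` for `a ≤ b`, `c ≤ d`,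
satisfies the rearrangement inequality: `∑ φ (f i) (g (σ i))` is minimized over `σ` when `g`
antivaries with `f`. The exchange argument of the classical rearrangement inequality goes through
verbatim: take `a` with `f a` maximal and `g a` minimal among those, and swap the value `g a` into
position `a`; that single swap does not increase the sum. For convex `f`, `(a, c) ↦ f (a + c)` has
increasing differences because `a + d` and `b + c` are convex combinations of `a + c` and `b + d`
with swapped weights.
-/

open Equiv Finset

def IncreasingDifferences {α β γ : Type*} [LE α] [LE β] [Add γ] [LE γ]
    (φ : α → β → γ) : Prop :=
  ∀ ⦃a b : α⦄, a ≤ b → ∀ ⦃c d : β⦄, c ≤ d → φ a d + φ b c ≤ φ a c + φ b d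

section Convex

variable {𝕜 β : Type*} [Field 𝕜] [LinearOrder 𝕜] [IsStrictOrderedRing 𝕜]
  [AddCommMonoid β] [PartialOrder β] [IsOrderedAddMonoid β] [Module 𝕜 β] {f : 𝕜 → β}

theorem ConvexOn.map_add_add_le_map_add_add {s : Set 𝕜} (hf : ConvexOn 𝕜 s f) {a b c d : 𝕜}
    (hac : a + c ∈ s) (hbd : b + d ∈ s) (hab : a ≤ b) (hcd : c ≤ d) :
    f (a + d) + f (b + c) ≤ f (a + c) + f (b + d) := by
  obtain hden | hden := (add_nonneg (sub_nonneg.2 hab) (sub_nonneg.2 hcd)).eq_or_lt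
  · obtain rfl : a = b := by linarith
    obtain rfl : c = d := by linarith
    rfl
  set t := (d - c) / ((b - a) + (d - c))
  have ht : 0 ≤ t := div_nonneg (sub_nonneg.2 hcd) hden.le
  have ht' : 0 ≤ 1 - t := by
    rw [sub_nonneg, div_le_one hden]; linarith
  have had : f (a + d) ≤ (1 - t) • f (a + c) + t • f (b + d) := by
    convert hf.2 hac hbd ht' ht (by ring) using 2
    simp only [smul_eq_mul, t]; field_simp; ring
  have hbc : f (b + c) ≤ t • f (a + c) + (1 - t) • f (b + d) := by
    convert hf.2 hac hbd ht ht' (by ring) using 2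
    simp only [smul_eq_mul, t]; field_simp; ring
  calc f (a + d) + f (b + c)
      ≤ ((1 - t) • f (a + c) + t • f (b + d)) + (t • f (a + c) + (1 - t) • f (b + d)) :=
        add_le_add had hbc
    _ = f (a + c) + f (b + d) := by
      rw [add_add_add_comm, ← add_smul, ← add_smul, sub_add_cancel, add_sub_cancel, one_smul,
        one_smul]

theorem ConvexOn.increasingDifferences_comp_add (hf : ConvexOn 𝕜 Set.univ f) :
    IncreasingDifferences fun a c ↦ f (a + c) :=
  fun _ _ hab _ _ hcd ↦ hf.map_add_add_le_map_add_add trivial trivial hab hcd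

end Convex

section Rearrangement

variable {ι α β γ : Type*} [LinearOrder α] [LinearOrder β]
  [AddCommMonoid γ] [PartialOrder γ] [IsOrderedAddMonoid γ]
  {φ : α → β → γ} {f : ι → α} {g : ι → β} {s : Finset ι} {σ : Perm ι}

theorem IncreasingDifferences.sum_le_sum_comp_perm_of_antivaryOn (hφ : IncreasingDifferences φ)
    (hgf : AntivaryOn g f s) (hσ : {i | σ i ≠ i} ⊆ s) :
    ∑ i ∈ s, φ (f i) (g i) ≤ ∑ i ∈ s, φ (f i) (g (σ i)) := by
  classical
  induction s using induction_on_max_value (fun i ↦ toLex (f i, OrderDual.toDual (g i)))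
    generalizing σ with
  | empty => simp
  | insert a s has hamax hind => ?_
  -- `τ` fixes `a` and differs from `σ` on `s` only at `σ⁻¹ a`: one exchange separates them.
  set τ : Perm ι := σ.trans (swap a (σ a)) with hτ
  have hτs : {i | τ i ≠ i} ⊆ s := by
    intro i hi
    have hia : i ≠ a := by rintro rfl; simp [τ] at hi
    refine mem_of_mem_insert_of_ne (hσ fun hσi ↦ hi ?_) hia
    rw [hτ, trans_apply, hσi, swap_apply_of_ne_of_ne hia]
    rintro rfl
    exact hia (σ.injective hσi)
  simp_rw [sum_insert has]
  grw [hind (hgf.subset (subset_insert _ _)) hτs]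
  obtain hσa | hσa := eq_or_ne a (σ a)
  · rw [hτ, ← hσa, swap_self, trans_refl]
  have hk : σ.symm a ∈ s := by
    have hka : σ.symm a ≠ a := fun h ↦ hσa (σ.symm_apply_eq.1 h)
    exact mem_of_mem_insert_of_ne (hσ (by simpa using hka.symm)) hka
  have hσa_mem : σ a ∈ s :=
    mem_of_mem_insert_of_ne (hσ (σ.injective.ne hσa.symm)) hσa.symm
  have hfk : f (σ.symm a) ≤ f a := by
    rcases Prod.Lex.toLex_le_toLex.1 (hamax _ hk) with h | h
    exacts [h.le, h.1.le]
  have hga : g a ≤ g (σ a) := by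
    rcases Prod.Lex.toLex_le_toLex.1 (hamax _ hσa_mem) with h | h
    exacts [hgf (mem_insert_of_mem hσa_mem) (mem_insert_self _ _) h, h.2]
  have hrest : ∑ i ∈ s.erase (σ.symm a), φ (f i) (g (τ i)) =
      ∑ i ∈ s.erase (σ.symm a), φ (f i) (g (σ i)) := by
    refine sum_congr rfl fun i hi ↦ ?_
    rw [mem_erase, Ne, eq_symm_apply] at hi
    have hia : i ≠ a := ne_of_mem_of_not_mem hi.2 has
    rw [hτ, trans_apply, swap_apply_of_ne_of_ne hi.1 (σ.injective.ne hia)]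
  rw [← s.add_sum_erase _ hk, ← s.add_sum_erase _ hk, hrest, ← add_assoc, ← add_assoc]
  simp only [hτ, trans_apply, apply_symm_apply, swap_apply_left]
  gcongr ?_ + _
  rw [add_comm, add_comm (φ (f a) _)]
  exact hφ hfk hga

theorem IncreasingDifferences.sum_le_sum_comp_perm_of_antivary [Fintype ι]
    (hφ : IncreasingDifferences φ) (hgf : Antivary g f) :
    ∑ i, φ (f i) (g i) ≤ ∑ i, φ (f i) (g (σ i)) :=
  hφ.sum_le_sum_comp_perm_of_antivaryOn (hgf.antivaryOn _) (by simp)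

end Rearrangement

/-- Rearrangement inequality for convex functions of sums: if `y'` is a
rearrangement of `y` that is oppositely ordered (countermonotonic) to `x`,
then for every convex `f`, `∑ f (x i + y' i) ≤ ∑ f (x i + y (σ i))`
for any permutation `σ`. -/
theorem stmt0 (m : ℕ) (x y y' : Fin m → ℝ) (σ τ : Equiv.Perm (Fin m))
    (hy' : y' = y ∘ τ)
    (hopp : ∀ i j, x i < x j → y' j ≤ y' i)
    (f : ℝ → ℝ) (hf : ConvexOn ℝ Set.univ f) :
    ∑ i, f (x i + y' i) ≤ ∑ i, f (x i + y (σ i)) := by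
  have hanti : Antivary y' x := fun i j ↦ hopp i j
  simpa [hy'] using
    hf.increasingDifferences_comp_add.sum_le_sum_comp_perm_of_antivary hanti (σ := σ.trans τ.symm)
end

section
/- Let μ = n(m+1)/2 be the mean row sum of an m×n matrix whose every column is a permutation of (1, 2, ..., m). Then any integer-valued vector S ∈ ℤ^m with ∑Sᵢ = m·μ satisfies (1/m)∑(Sᵢ − μ)² ≥ (μ − ⌊μ⌋)(⌈μ⌉ − μ). -/
/-- Lower bound for the variance of an integer-valued vector with mean
`μ = n(m+1)/2`: `(1/m)∑ (Sᵢ − μ)² ≥ (μ − ⌊μ⌋)(⌈μ⌉ − μ)`. -/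
theorem stmt7 (m n : ℕ) (hm : 0 < m) (S : Fin m → ℤ) (μ : ℝ)
    (hμ : μ = n * (m + 1) / 2)
    (hsum : ∑ i, (S i : ℝ) = m * μ) :
    (μ - (⌊μ⌋ : ℝ)) * ((⌈μ⌉ : ℝ) - μ) ≤ (1 / (m : ℝ)) * ∑ i, ((S i : ℝ) - μ) ^ 2 := by
  set f : ℝ := μ - (⌊μ⌋ : ℝ) with hf
  have hf0 : 0 ≤ f := sub_nonneg.mpr (Int.floor_le μ)
  have hmpos : (0:ℝ) < m := by exact_mod_cast hm
  -- pointwise bound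
  have hpt : ∀ i, ((S i : ℝ) - (⌊μ⌋ : ℝ)) * (1 - 2 * f) + f ^ 2 ≤ ((S i : ℝ) - μ) ^ 2 := by
    intro i
    have ht : ((S i - ⌊μ⌋ : ℤ) : ℝ) ≤ (((S i - ⌊μ⌋) : ℤ) : ℝ) ^ 2 := by
      exact_mod_cast Int.le_self_sq (S i - ⌊μ⌋)
    push_cast at ht
    nlinarith [ht]
  have hsum2 : (m : ℝ) * (f * (1 - f)) ≤ ∑ i, ((S i : ℝ) - μ) ^ 2 := by
    calc (m : ℝ) * (f * (1 - f))
        = (∑ i, (((S i : ℝ) - (⌊μ⌋ : ℝ)) * (1 - 2 * f) + f ^ 2)) := by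
          rw [Finset.sum_add_distrib, ← Finset.sum_mul, Finset.sum_sub_distrib, hsum]
          simp [Finset.card_univ]
          ring
      _ ≤ ∑ i, ((S i : ℝ) - μ) ^ 2 := Finset.sum_le_sum (fun i _ => hpt i)
  have hceil : ((⌈μ⌉ : ℝ) - μ) ≤ 1 - f := by
    have := Int.ceil_le_floor_add_one μ
    have : ((⌈μ⌉ : ℝ)) ≤ (⌊μ⌋ : ℝ) + 1 := by exact_mod_cast this
    rw [hf]; linarith
  have hfin : f * (1 - f) ≤ (1 / (m : ℝ)) * ∑ i, ((S i : ℝ) - μ) ^ 2 := by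
    rw [one_div, ← div_eq_inv_mul, le_div_iff₀ hmpos]
    linarith [hsum2]
  calc f * ((⌈μ⌉ : ℝ) - μ) ≤ f * (1 - f) := by
        apply mul_le_mul_of_nonneg_left hceil hf0
    _ ≤ _ := hfin
end

section
/- For any c ∈ [0, 2a], there exist random variables U₁, U₂, each uniformly distributed on [−a, a], such that U₁ + U₂ is uniformly distributed on [−c, c]. In particular (c = 0) there exist two dependent uniforms on [−a,a] whose sum is identically 0 (complete mixability of two uniforms). -/
open MeasureTheory

/-- The uniform probability measure on `[-a, a]`. -/
noncomputable def unif (a : ℝ) : Measure ℝ :=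
  (ENNReal.ofReal (2 * a))⁻¹ • volume.restrict (Set.Icc (-a) a)

/-!
For `c = 0` and `c = 2a` take `U₂ = -U₁` and `U₂ = U₁`. For `0 < c < 2a` put `d = 2a - c`,
`q = invSqFrom d`, i.e. `q r = r⁻² 𝟙[d ≤ r]`, and `K = d / (2c)`; the pair has density
`K (q |x - y| + q (2a - |x + y|))` on `[-a, a]²`. This is a mixture over `s ∈ [0, c]`, with
weight proportional to `(2a - s)⁻²`, of the uniform measures on the union of the four segments
`x + y = ±s`, `y - x = ±(2a - s)` of the square, each of which has uniform marginals.

With `Q r = 1 / max r d` one has `∫ₚʳ q = Q p - Q r`. The density of `U₁` is then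
`K (2 Q 0 - 2 Q (2a)) = 1 / (2a)`, the terms `Q (a ± x)` cancelling. In the coordinates
`s = x + y`, `w = x - y` the density is `K (q |w| + q r)` on `|w| ≤ r := 2a - |s|`, so the density
of the sum is `K (Q 0 - Q r + r q r)`, which is `1 / (2c)` for `|s| ≤ c` and `0` otherwise.
-/

open Set

noncomputable def invSqFrom (d r : ℝ) : ℝ := if d ≤ r then (r ^ 2)⁻¹ else 0

lemma intervalIntegrable_of_abs_le {g : ℝ → ℝ} (hg : Measurable g) {M : ℝ}
    (hM : ∀ u, |g u| ≤ M) (u v : ℝ) : IntervalIntegrable g volume u v :=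
  intervalIntegrable_const.mono_fun' hg.aestronglyMeasurable (ae_of_all _ hM)

section InvSqFrom

variable {d : ℝ}

@[fun_prop]
lemma measurable_invSqFrom : Measurable (invSqFrom d) :=
  Measurable.ite measurableSet_Ici (by fun_prop) measurable_const

lemma invSqFrom_nonneg (r : ℝ) : 0 ≤ invSqFrom d r := by
  unfold invSqFrom; split_ifs <;> positivity

lemma invSqFrom_le (hd : 0 < d) (r : ℝ) : invSqFrom d r ≤ (d ^ 2)⁻¹ := by
  unfold invSqFrom
  split_ifs with h
  · exact inv_anti₀ (by positivity) (pow_le_pow_left₀ hd.le h 2)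
  · positivity

lemma abs_invSqFrom_le (hd : 0 < d) (r : ℝ) : |invSqFrom d r| ≤ (d ^ 2)⁻¹ := by
  rw [abs_of_nonneg (invSqFrom_nonneg r)]; exact invSqFrom_le hd r

-- A right derivative also exists at the jump `r = d` of `invSqFrom d`, which is what the
-- fundamental theorem of calculus below needs.
lemma hasDerivWithinAt_neg_inv_max (hd : 0 < d) (u : ℝ) :
    HasDerivWithinAt (fun v => -(max v d)⁻¹) (invSqFrom d u) (Ioi u) u := by
  rcases lt_or_ge u d with hu | hu
  · have hconst : (fun v => -(max v d)⁻¹) =ᶠ[nhds u] fun _ => -d⁻¹ := by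
      filter_upwards [eventually_lt_nhds hu] with v hv
      rw [max_eq_right hv.le]
    rw [invSqFrom, if_neg hu.not_ge]
    exact ((hasDerivAt_const u _).congr_of_eventuallyEq hconst).hasDerivWithinAt
  · have hinv : HasDerivAt (fun v : ℝ => -v⁻¹) (u ^ 2)⁻¹ u := by
      simpa using (hasDerivAt_inv (hd.trans_le hu).ne').fun_neg
    rw [invSqFrom, if_pos hu]
    refine hinv.hasDerivWithinAt.congr (fun v hv => ?_) (by rw [max_eq_left hu])
    rw [max_eq_left (hu.trans (le_of_lt hv))]

lemma integral_invSqFrom (hd : 0 < d) (p r : ℝ) :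
    ∫ u in p..r, invSqFrom d u = (max p d)⁻¹ - (max r d)⁻¹ := by
  have hcont : Continuous fun v : ℝ => -(max v d)⁻¹ :=
    ((continuous_id.max continuous_const).inv₀ fun v => (hd.trans_le (le_max_right v d)).ne').neg
  rw [intervalIntegral.integral_eq_sub_of_hasDeriv_right hcont.continuousOn
    (fun u _ => hasDerivWithinAt_neg_inv_max hd u)
    (intervalIntegrable_of_abs_le measurable_invSqFrom (abs_invSqFrom_le hd) p r)]
  ring

end InvSqFrom

lemma intervalIntegral_comp_abs_sub {g : ℝ → ℝ} (hg : Measurable g) {M : ℝ}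
    (hM : ∀ u, |g u| ≤ M) {p β r : ℝ} (hp : p ≤ β) (hr : β ≤ r) :
    ∫ y in p..r, g |y - β| = (∫ u in 0..β - p, g u) + ∫ u in 0..r - β, g u := by
  have hint : ∀ u v, IntervalIntegrable (fun y => g |y - β|) volume u v :=
    intervalIntegrable_of_abs_le (hg.comp (by fun_prop : Measurable fun y => |y - β|))
    fun y => hM _
  rw [← intervalIntegral.integral_add_adjacent_intervals (hint p β) (hint β r)]
  congr 1
  · rw [intervalIntegral.integral_congr (g := fun y => g (β - y)) fun y hy => by
      rw [uIcc_of_le hp] at hy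
      rw [abs_of_nonpos (by linarith [hy.2]), neg_sub]]
    rw [intervalIntegral.integral_comp_sub_left, sub_self]
  · rw [intervalIntegral.integral_congr (g := fun y => g (y - β)) fun y hy => by
      rw [uIcc_of_le hr] at hy
      rw [abs_of_nonneg (by linarith [hy.1])]]
    rw [intervalIntegral.integral_comp_sub_right, sub_self]

section Marginals

variable {α β : Type*} [MeasurableSpace α] [MeasurableSpace β] {μ : Measure α} {ν : Measure β}
  {f : α × β → ENNReal}

lemma map_fst_withDensity_prod [SFinite μ] [SFinite ν] (hf : Measurable f) :
    ((μ.prod ν).withDensity f).map Prod.fst = μ.withDensity fun x => ∫⁻ y, f (x, y) ∂ν := by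
  ext E hE
  rw [Measure.map_apply measurable_fst hE, withDensity_apply _ (measurable_fst hE),
    withDensity_apply _ hE, ← prod_univ, setLIntegral_prod _ hf.aemeasurable]
  simp_rw [Measure.restrict_univ]

lemma map_snd_withDensity_prod [SFinite μ] [SFinite ν] (hf : Measurable f) :
    ((μ.prod ν).withDensity f).map Prod.snd = ν.withDensity fun y => ∫⁻ x, f (x, y) ∂μ := by
  ext E hE
  rw [Measure.map_apply measurable_snd hE, withDensity_apply _ (measurable_snd hE),
    withDensity_apply _ hE, ← univ_prod, setLIntegral_prod_symm _ hf.aemeasurable]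
  simp_rw [Measure.restrict_univ]

end Marginals

lemma map_add_withDensity_prod {G : Type*} [AddCommGroup G] [MeasurableSpace G]
    [MeasurableAdd₂ G] [MeasurableNeg G] {μ ν : Measure G} [SFinite μ] [SFinite ν]
    [μ.IsAddRightInvariant] {f : G × G → ENNReal} (hf : Measurable f) :
    ((ν.prod μ).withDensity f).map (fun p => p.1 + p.2)
      = μ.withDensity fun s => ∫⁻ t, f (t, s - t) ∂ν := by
  have hadd : Measurable fun p : G × G => p.1 + p.2 := by fun_prop
  ext E hE
  rw [Measure.map_apply hadd hE, withDensity_apply _ (hadd hE), withDensity_apply _ hE,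
    ← (measurePreserving_prod_sub_swap μ ν).setLIntegral_comp_preimage (hadd hE) hf]
  have hpre : (fun z : G × G => (z.2, z.1 - z.2)) ⁻¹' ((fun p : G × G => p.1 + p.2) ⁻¹' E)
      = E ×ˢ univ := by
    ext z; simp
  rw [hpre, setLIntegral_prod (fun z => f (z.2, z.1 - z.2)) (hf.comp (by fun_prop)).aemeasurable]
  simp_rw [Measure.restrict_univ]

lemma unif_eq_withDensity {a : ℝ} (ha : 0 < a) :
    unif a = volume.withDensity fun x =>
      ENNReal.ofReal ((Icc (-a) a).indicator (fun _ => (2 * a)⁻¹) x) := by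
  have : (fun x => ENNReal.ofReal ((Icc (-a) a).indicator (fun _ => (2 * a)⁻¹) x))
      = (Icc (-a) a).indicator fun _ => ENNReal.ofReal (2 * a)⁻¹ := by
    ext x; by_cases hx : x ∈ Icc (-a) a <;> simp [hx]
  rw [this, withDensity_indicator measurableSet_Icc, withDensity_const,
    ENNReal.ofReal_inv_of_pos (by positivity), unif]

lemma map_const_mul_unif {a r : ℝ} (ha : 0 < a) (hr : r ≠ 0) :
    (unif a).map (r * ·) = unif (|r| * a) := by
  have hpre : (r * ·) ⁻¹' Icc (-(|r| * a)) (|r| * a) = Icc (-a) a := by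
    ext x
    simp only [mem_preimage, mem_Icc, ← abs_le, abs_mul]
    exact mul_le_mul_iff_right₀ (abs_pos.mpr hr)
  have hvol : (volume.restrict (Icc (-a) a)).map (r * ·)
      = ENNReal.ofReal |r⁻¹| • volume.restrict (Icc (-(|r| * a)) (|r| * a)) := by
    rw [← hpre, ← Measure.restrict_map (measurable_const_mul r) measurableSet_Icc,
      Real.map_volume_mul_left hr, Measure.restrict_smul]
  rw [unif, Measure.map_smul, hvol, smul_smul, unif, abs_inv,
    ← ENNReal.ofReal_inv_of_pos (by positivity), ← ENNReal.ofReal_inv_of_pos (by positivity),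
    ← ENNReal.ofReal_mul (by positivity)]
  congr 2
  field_simp

lemma isProbabilityMeasure_unif {a : ℝ} (ha : 0 < a) : IsProbabilityMeasure (unif a) := by
  constructor
  rw [unif, Measure.smul_apply, Measure.restrict_apply_univ, Real.volume_Icc, smul_eq_mul,
    show a - -a = 2 * a by ring]
  exact ENNReal.inv_mul_cancel (by simpa using ha) ENNReal.ofReal_ne_top

noncomputable def couplingDensity (a c x y : ℝ) : ℝ :=
  if x ∈ Icc (-a) a ∧ y ∈ Icc (-a) a then
    (2 * a - c) / (2 * c) *
      (invSqFrom (2 * a - c) |x - y| + invSqFrom (2 * a - c) (2 * a - |x + y|))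
  else 0

section CouplingDensity

variable {a c : ℝ}

lemma couplingDensity_comm (x y : ℝ) : couplingDensity a c x y = couplingDensity a c y x := by
  simp only [couplingDensity, and_comm, abs_sub_comm x y, add_comm x y]

lemma integral_couplingDensity_right (hc : 0 < c) (hca : c < 2 * a) (x : ℝ) :
    ∫ y, couplingDensity a c x y = (Icc (-a) a).indicator (fun _ => (2 * a)⁻¹) x := by
  have hd : 0 < 2 * a - c := by linarith
  by_cases hx : x ∉ Icc (-a) a
  · simp [couplingDensity, hx]
  rw [not_not] at hx
  have hslice : (fun y => couplingDensity a c x y) = (Icc (-a) a).indicator fun y =>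
      (2 * a - c) / (2 * c) *
        (invSqFrom (2 * a - c) |y - x| + invSqFrom (2 * a - c) (2 * a - |y - -x|)) := by
    ext y
    by_cases hy : y ∈ Icc (-a) a
    · simp [couplingDensity, hx, hy, abs_sub_comm x y, add_comm x y]
    · simp [couplingDensity, hy]
  have hq : ∀ u v, IntervalIntegrable (fun y => invSqFrom (2 * a - c) |y - x|) volume u v :=
    intervalIntegrable_of_abs_le (by fun_prop) fun _ => abs_invSqFrom_le hd _
  have hq' : ∀ u v, IntervalIntegrable
      (fun y => invSqFrom (2 * a - c) (2 * a - |y - -x|)) volume u v :=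
    intervalIntegrable_of_abs_le (by fun_prop) fun _ => abs_invSqFrom_le hd _
  have ⟨hx₁, hx₂⟩ := hx
  rw [hslice, integral_indicator measurableSet_Icc, integral_Icc_eq_integral_Ioc,
    ← intervalIntegral.integral_of_le (by linarith), intervalIntegral.integral_const_mul,
    intervalIntegral.integral_add (hq _ _) (hq' _ _),
    intervalIntegral_comp_abs_sub measurable_invSqFrom (abs_invSqFrom_le hd) hx₁ hx₂,
    intervalIntegral_comp_abs_sub (g := fun u => invSqFrom (2 * a - c) (2 * a - u)) (by fun_prop)
      (fun _ => abs_invSqFrom_le hd _) (by linarith) (by linarith),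
    intervalIntegral.integral_comp_sub_left, intervalIntegral.integral_comp_sub_left]
  simp only [integral_invSqFrom hd]
  rw [indicator_of_mem hx, show 2 * a - (-x - -a) = x - -a by ring,
    show 2 * a - (a - -x) = a - x by ring, sub_zero, max_eq_right hd.le,
    max_eq_left (by linarith : 2 * a - c ≤ 2 * a)]
  have ha : a ≠ 0 := by linarith
  field_simp
  ring

lemma couplingDensity_shear_eq (s w : ℝ) :
    couplingDensity a c (s / 2 + 2⁻¹ * w) (s - (s / 2 + 2⁻¹ * w))
      = (Icc (-(2 * a - |s|)) (2 * a - |s|)).indicator (fun w => (2 * a - c) / (2 * c) *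
          (invSqFrom (2 * a - c) |w| + invSqFrom (2 * a - c) (2 * a - |s|))) w := by
  have hmem : (s / 2 + 2⁻¹ * w ∈ Icc (-a) a ∧ s - (s / 2 + 2⁻¹ * w) ∈ Icc (-a) a)
      ↔ w ∈ Icc (-(2 * a - |s|)) (2 * a - |s|) := by
    simp only [mem_Icc]
    rcases abs_cases s with ⟨h, _⟩ | ⟨h, _⟩ <;> rw [h] <;> grind
  rw [couplingDensity, show s / 2 + 2⁻¹ * w - (s - (s / 2 + 2⁻¹ * w)) = w by ring,
    show s / 2 + 2⁻¹ * w + (s - (s / 2 + 2⁻¹ * w)) = s by ring]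
  simp only [hmem, indicator]

lemma integral_couplingDensity_shear (hc : 0 < c) (hca : c < 2 * a) (s : ℝ) :
    ∫ t, couplingDensity a c t (s - t) = (Icc (-c) c).indicator (fun _ => (2 * c)⁻¹) s := by
  have hd : 0 < 2 * a - c := by linarith
  have hsub := Measure.integral_comp_mul_left
    (fun u => couplingDensity a c (s / 2 + u) (s - (s / 2 + u))) 2⁻¹
  beta_reduce at hsub
  rw [integral_add_left_eq_self (fun t => couplingDensity a c t (s - t)) (s / 2), inv_inv,
    abs_two, smul_eq_mul] at hsub
  simp_rw [couplingDensity_shear_eq] at hsub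
  rw [integral_indicator measurableSet_Icc] at hsub
  generalize hr : 2 * a - |s| = r at hsub
  rw [eq_inv_mul_iff_mul_eq₀ two_ne_zero |>.mpr hsub.symm]
  rcases lt_or_ge r 0 with hr0 | hr0
  · rw [Icc_eq_empty (by linarith), Measure.restrict_empty, integral_zero_measure, mul_zero,
      indicator_of_notMem]
    rw [mem_Icc, ← abs_le]
    linarith
  have hq : ∀ u v, IntervalIntegrable (fun w => invSqFrom (2 * a - c) |w|) volume u v :=
    intervalIntegrable_of_abs_le (by fun_prop) fun _ => abs_invSqFrom_le hd _
  have hsplit := intervalIntegral_comp_abs_sub measurable_invSqFrom (abs_invSqFrom_le hd)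
    (show -r ≤ 0 by linarith) hr0
  simp only [sub_zero, zero_sub, neg_neg] at hsplit
  rw [integral_Icc_eq_integral_Ioc, ← intervalIntegral.integral_of_le (by linarith),
    intervalIntegral.integral_const_mul, intervalIntegral.integral_add (hq _ _) (by simp),
    hsplit, intervalIntegral.integral_const, integral_invSqFrom hd, max_eq_right hd.le,
    sub_neg_eq_add, smul_eq_mul]
  rcases le_or_gt (2 * a - c) r with hrd | hrd
  · have hr' : r ≠ 0 := by linarith
    rw [max_eq_left hrd, invSqFrom, if_pos hrd,
      indicator_of_mem (by rw [mem_Icc, ← abs_le]; linarith)]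
    field_simp
    ring
  · rw [max_eq_right hrd.le, invSqFrom, if_neg hrd.not_ge,
      indicator_of_notMem (by rw [mem_Icc, ← abs_le]; linarith)]
    ring

lemma couplingDensity_nonneg (hc : 0 ≤ c) (hca : c ≤ 2 * a) (x y : ℝ) :
    0 ≤ couplingDensity a c x y := by
  unfold couplingDensity
  split_ifs
  · exact mul_nonneg (div_nonneg (by linarith) (by linarith))
      (add_nonneg (invSqFrom_nonneg _) (invSqFrom_nonneg _))
  · exact le_rfl

@[fun_prop]
lemma measurable_couplingDensity : Measurable fun p : ℝ × ℝ => couplingDensity a c p.1 p.2 :=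
  Measurable.ite (measurableSet_Icc.prod measurableSet_Icc) (by fun_prop) measurable_const

lemma integrable_couplingDensity_comp (hc : 0 < c) (hca : c < 2 * a) {g : ℝ → ℝ}
    (hg : Measurable g) : Integrable fun t => couplingDensity a c t (g t) := by
  have hd : 0 < 2 * a - c := by linarith
  have hbound (x y : ℝ) : |couplingDensity a c x y|
      ≤ (2 * a - c) / (2 * c) * (2 * ((2 * a - c) ^ 2)⁻¹) := by
    rw [abs_of_nonneg (couplingDensity_nonneg hc.le hca.le x y), couplingDensity]
    split_ifs
    · have h₁ := invSqFrom_le hd (|x - y|)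
      have h₂ := invSqFrom_le hd (2 * a - |x + y|)
      exact mul_le_mul_of_nonneg_left (by linarith) (div_nonneg hd.le (by linarith))
    · positivity
  refine (Measure.integrableOn_of_bounded (s := Icc (-a) a) measure_Icc_lt_top.ne
    (measurable_couplingDensity.comp (measurable_id.prodMk hg)).aestronglyMeasurable
    (ae_of_all _ fun t => hbound t (g t))).integrable_of_forall_notMem_eq_zero
    fun t ht => if_neg fun h => ht h.1

end CouplingDensity

noncomputable def couplingMeasure (a c : ℝ) : Measure (ℝ × ℝ) :=
  volume.withDensity fun p => ENNReal.ofReal (couplingDensity a c p.1 p.2)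

section CouplingMeasure

variable {a c : ℝ}

lemma lintegral_couplingDensity_right (hc : 0 < c) (hca : c < 2 * a) (x : ℝ) :
    ∫⁻ y, ENNReal.ofReal (couplingDensity a c x y)
      = ENNReal.ofReal ((Icc (-a) a).indicator (fun _ => (2 * a)⁻¹) x) := by
  have hint := integrable_couplingDensity_comp hc hca (measurable_const (a := x))
  simp_rw [← couplingDensity_comm x] at hint
  rw [← integral_couplingDensity_right hc hca x,
    ofReal_integral_eq_lintegral_ofReal hint (ae_of_all _ (couplingDensity_nonneg hc.le hca.le x))]

lemma map_fst_couplingMeasure (hc : 0 < c) (hca : c < 2 * a) :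
    (couplingMeasure a c).map Prod.fst = unif a := by
  rw [couplingMeasure, Measure.volume_eq_prod, map_fst_withDensity_prod (by fun_prop),
    unif_eq_withDensity (by linarith)]
  simp_rw [lintegral_couplingDensity_right hc hca]

lemma map_snd_couplingMeasure (hc : 0 < c) (hca : c < 2 * a) :
    (couplingMeasure a c).map Prod.snd = unif a := by
  rw [couplingMeasure, Measure.volume_eq_prod, map_snd_withDensity_prod (by fun_prop),
    unif_eq_withDensity (by linarith)]
  simp_rw [couplingDensity_comm _ (_ : ℝ), lintegral_couplingDensity_right hc hca]

lemma map_add_couplingMeasure (hc : 0 < c) (hca : c < 2 * a) :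
    (couplingMeasure a c).map (fun p => p.1 + p.2) = unif c := by
  rw [couplingMeasure, Measure.volume_eq_prod, map_add_withDensity_prod (by fun_prop),
    unif_eq_withDensity hc]
  congr 1
  ext s
  rw [← integral_couplingDensity_shear hc hca s, ofReal_integral_eq_lintegral_ofReal
    (integrable_couplingDensity_comp hc hca (by fun_prop))
    (ae_of_all _ fun t => couplingDensity_nonneg hc.le hca.le t (s - t))]

lemma isProbabilityMeasure_couplingMeasure (hc : 0 < c) (hca : c < 2 * a) :
    IsProbabilityMeasure (couplingMeasure a c) := by
  have := isProbabilityMeasure_unif (a := a) (by linarith)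
  rw [← map_fst_couplingMeasure hc hca] at this
  exact Measure.isProbabilityMeasure_of_map Prod.fst

end CouplingMeasure

/-- For any `0 ≤ c ≤ 2a` there exist two random variables, each uniform on `[-a,a]`,
whose sum is uniform on `[-c, c]` (for `c = 0`, the sum is identically `0`:
complete mixability of two uniforms). -/
theorem stmt18 (a : ℝ) (ha : 0 < a) (c : ℝ) (hc0 : 0 ≤ c) (hc : c ≤ 2 * a) :
    ∃ ν : Measure (ℝ × ℝ), IsProbabilityMeasure ν ∧
      ν.map Prod.fst = unif a ∧ ν.map Prod.snd = unif a ∧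
      ν.map (fun p => p.1 + p.2)
        = (if c = 0 then Measure.dirac (0 : ℝ) else unif c) := by
  have := isProbabilityMeasure_unif ha
  have hsum : Measurable fun p : ℝ × ℝ => p.1 + p.2 := by fun_prop
  rcases hc0.eq_or_lt with rfl | hc0
  · refine ⟨(unif a).map fun x => (x, -x), Measure.isProbabilityMeasure_map (by fun_prop),
      ?_, ?_, ?_⟩
    · exact (Measure.map_map measurable_fst (by fun_prop)).trans Measure.map_id
    · rw [Measure.map_map measurable_snd (by fun_prop), Function.comp_def]
      rw [show (fun x : ℝ => -x) = ((-1 : ℝ) * ·) from funext fun x => (neg_one_mul x).symm,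
        map_const_mul_unif ha (by norm_num), abs_neg, abs_one, one_mul]
    · rw [Measure.map_map hsum (by fun_prop), if_pos rfl]
      simp [Function.comp_def, Measure.map_const]
  rcases hc.eq_or_lt with rfl | hc
  · refine ⟨(unif a).map fun x => (x, x), Measure.isProbabilityMeasure_map (by fun_prop),
      ?_, ?_, ?_⟩
    · exact (Measure.map_map measurable_fst (by fun_prop)).trans Measure.map_id
    · exact (Measure.map_map measurable_snd (by fun_prop)).trans Measure.map_id
    · rw [Measure.map_map hsum (by fun_prop), if_neg hc0.ne', Function.comp_def]
      simp_rw [← two_mul]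
      rw [map_const_mul_unif ha two_ne_zero, abs_two]
  exact ⟨couplingMeasure a c, isProbabilityMeasure_couplingMeasure hc0 hc,
    map_fst_couplingMeasure hc0 hc, map_snd_couplingMeasure hc0 hc,
    by rw [if_neg hc0.ne', map_add_couplingMeasure hc0 hc]⟩
end
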